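/- arXiv:2009.08416 — 3 statements merged into one kernel-verified Lean document; each statement's English description precedes it below -/
import Mathlib

section
/- Let G = (V, E, w) be a weighted undirected graph with nonnegative weights, let A ⊆ V be a set of 'centers', and let A' ⊆ A. For v ∈ A define the cluster C(v) = { u ∈ V : d_G(u, v) < d_G(u, A') }, where d_G(u, A') = min_{a ∈ A'} d_G(u, a) (and d_G(u, ∅) = ∞). Then clusters are connected along shortest paths: if u ∈ C(v) and z is a vertex lying on some shortest path between v and u in G, then z ∈ C(v). -/
open scoped ENNReal BigOperators Classical

noncomputable def hdist {V : Type*} [Fintype V] [DecidableEq V]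
    (w : V → V → ℝ≥0∞) : ℕ → V → V → ℝ≥0∞
  | 0, u, v => if u = v then 0 else ⊤
  | h + 1, u, v => min (hdist w h u v) (⨅ x, w u x + hdist w h x v)

noncomputable def gdist {V : Type*} [Fintype V] [DecidableEq V]
    (w : V → V → ℝ≥0∞) (u v : V) : ℝ≥0∞ :=
  ⨅ h : ℕ, hdist w h u v

section aux

variable {V : Type*} [Fintype V] [DecidableEq V] (w : V → V → ℝ≥0∞)

lemma hdist_succ_le (h : ℕ) (u v : V) : hdist w (h + 1) u v ≤ hdist w h u v := by
  rw [hdist]; exact min_le_left _ _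

lemma hdist_anti {h k : ℕ} (hk : h ≤ k) (u v : V) : hdist w k u v ≤ hdist w h u v := by
  induction k with
  | zero => simp_all
  | succ n ih =>
    rcases Nat.lt_or_ge h (n + 1) with h' | h'
    · exact (hdist_succ_le w n u v).trans (ih (Nat.lt_succ_iff.mp h'))
    · have : h = n + 1 := le_antisymm hk h'
      simp [this]

lemma hdist_le_edge_add (k : ℕ) (a b x : V) :
    hdist w (k + 1) a b ≤ hdist w k a x + w x b := by
  induction k generalizing a with
  | zero =>
    by_cases hax : a = x
    · subst hax
      calc hdist w 1 a b ≤ ⨅ y, w a y + hdist w 0 y b := by rw [hdist]; exact min_le_right _ _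
        _ ≤ w a b + hdist w 0 b b := iInf_le _ b
        _ = hdist w 0 a a + w a b := by simp [hdist]
    · simp [hdist, hax]
  | succ n ih =>
    conv_rhs => rw [hdist]
    rcases le_total (hdist w n a x) (⨅ y, w a y + hdist w n y x) with h' | h'
    · rw [min_eq_left h']
      exact (hdist_succ_le w (n + 1) a b).trans (ih a)
    · rw [min_eq_right h']
      rw [ENNReal.iInf_add]
      refine le_iInf fun y => ?_
      calc hdist w (n + 1 + 1) a b ≤ ⨅ y, w a y + hdist w (n + 1) y b := by
              rw [hdist]; exact min_le_right _ _
        _ ≤ w a y + hdist w (n + 1) y b := iInf_le _ y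
        _ ≤ w a y + (hdist w n y x + w x b) := by gcongr; exact ih y
        _ = w a y + hdist w n y x + w x b := by ring

lemma hdist_symm_le (hsym : ∀ u v, w u v = w v u) (h : ℕ) (u v : V) :
    hdist w h v u ≤ hdist w h u v := by
  induction h generalizing u v with
  | zero => simp [hdist, eq_comm]
  | succ n ih =>
    rw [hdist]
    refine le_min ((hdist_succ_le w n v u).trans (ih u v)) (le_iInf fun x => ?_)
    calc hdist w (n + 1) v u ≤ hdist w n v x + w x u := hdist_le_edge_add w n v u x
      _ ≤ hdist w n x v + w x u := by gcongr; exact ih x v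
      _ = w u x + hdist w n x v := by rw [hsym u x, add_comm]

lemma hdist_symm (hsym : ∀ u v, w u v = w v u) (h : ℕ) (u v : V) :
    hdist w h u v = hdist w h v u :=
  le_antisymm (hdist_symm_le w hsym h v u) (hdist_symm_le w hsym h u v)

lemma gdist_symm (hsym : ∀ u v, w u v = w v u) (u v : V) :
    gdist w u v = gdist w v u := by
  unfold gdist; simp_rw [hdist_symm w hsym _ u v]

lemma hdist_triangle (h k : ℕ) (u z v : V) :
    hdist w (h + k) u v ≤ hdist w h u z + hdist w k z v := by
  induction h generalizing u with
  | zero =>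
    by_cases huz : u = z
    · subst huz; simp [hdist]
    · simp [hdist, huz]
  | succ n ih =>
    rw [hdist]
    rcases le_total (hdist w n u z) (⨅ x, w u x + hdist w n x z) with h' | h'
    · rw [min_eq_left h']
      have : n + 1 + k = (n + k) + 1 := by ring
      rw [this]
      exact (hdist_succ_le w (n + k) u v).trans (ih u)
    · rw [min_eq_right h']
      rw [ENNReal.iInf_add]
      refine le_iInf fun x => ?_
      calc hdist w (n + 1 + k) u v = hdist w ((n + k) + 1) u v := by ring_nf
        _ ≤ ⨅ y, w u y + hdist w (n + k) y v := by rw [hdist]; exact min_le_right _ _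
        _ ≤ w u x + hdist w (n + k) x v := iInf_le _ x
        _ ≤ w u x + (hdist w n x z + hdist w k z v) := by gcongr; exact ih x
        _ = w u x + hdist w n x z + hdist w k z v := by ring

lemma gdist_triangle (u z v : V) :
    gdist w u v ≤ gdist w u z + gdist w z v := by
  unfold gdist
  rw [ENNReal.iInf_add_iInf (f := fun h => hdist w h u z) (g := fun k => hdist w k z v)
    (fun i j => ⟨max i j, by
      gcongr
      · exact hdist_anti w (le_max_left i j) u z
      · exact hdist_anti w (le_max_right i j) z v⟩)]
  refine le_iInf fun n => ?_
  exact (iInf_le _ (n + n)).trans (hdist_triangle w n n u z v)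

end aux

/-- Clusters are connected along shortest paths: if `u ∈ C(v)` (i.e. `d_G(u,v) < d_G(u,A')`)
and `z` lies on a shortest path between `v` and `u`, then `z ∈ C(v)`. -/
theorem stmt_0 {V : Type*} [Fintype V] [DecidableEq V]
    (w : V → V → ℝ≥0∞) (hsym : ∀ u v, w u v = w v u)
    (A A' : Finset V) (hA' : A' ⊆ A)
    (v : V) (hv : v ∈ A) (u z : V)
    (hu : gdist w u v < ⨅ a ∈ A', gdist w u a)
    (hz : gdist w v z + gdist w z u = gdist w v u) :
    gdist w z v < ⨅ a ∈ A', gdist w z a := by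
  have huv_top : gdist w u v < ⊤ := hu.trans_le le_top
  have hzv_le : gdist w z v ≤ gdist w u v := by
    rw [gdist_symm w hsym z v, gdist_symm w hsym u v, ← hz]
    exact le_add_right le_rfl
  have key : ∀ a ∈ A', gdist w z v < gdist w z a := by
    intro a ha
    by_contra hcon
    push_neg at hcon
    have h1 : gdist w u a ≤ gdist w u v := by
      calc gdist w u a ≤ gdist w u z + gdist w z a := gdist_triangle w u z a
        _ ≤ gdist w u z + gdist w z v := by gcongr
        _ = gdist w v z + gdist w z u := by
            rw [gdist_symm w hsym u z, gdist_symm w hsym z v, add_comm]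
        _ = gdist w v u := hz
        _ = gdist w u v := gdist_symm w hsym v u
    have h2 : (⨅ a ∈ A', gdist w u a) ≤ gdist w u a := by
      exact biInf_le _ ha
    exact absurd (h2.trans h1) (not_le_of_gt hu)
  rcases A'.eq_empty_or_nonempty with hE | ⟨a0, ha0⟩
  · simpa [hE] using hzv_le.trans_lt huv_top
  · obtain ⟨b, hb, hbmin⟩ := A'.exists_min_image (fun a => gdist w z a) ⟨a0, ha0⟩
    exact (key b hb).trans_le (le_iInf₂ fun a ha => hbmin a ha)
end

section
/- Let π = (v_0, v_1, ..., v_m) be a path in a weighted graph with nonnegative edge weights and total weight L. Then there exists an index i with 0 ≤ i < m such that the prefix subpath from v_0 to v_i has weight at most L/2 and the suffix subpath from v_{i+1} to v_m has weight at most L/2 (so π splits into a prefix of weight ≤ L/2, a single edge (v_i, v_{i+1}), and a suffix of weight ≤ L/2). -/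
open Finset

/-- Cut at the last index `i` whose prefix sum is still `≤ c`: either `i + 1 = m` and the suffix
is empty, or the prefix through `i + 1` exceeds `c`, leaving at most `total - c` for the suffix. -/
theorem exists_sum_range_le_and_sum_Ico_le {α : Type*} [AddCommGroup α] [LinearOrder α]
    [IsOrderedAddMonoid α] (w : ℕ → α) {m : ℕ} (hm : 0 < m) {c : α} (hc : 0 ≤ c)
    (hcL : c ≤ ∑ j ∈ range m, w j) :
    ∃ i < m, ∑ j ∈ range i, w j ≤ c ∧ ∑ j ∈ Ico (i + 1) m, w j ≤ ∑ j ∈ range m, w j - c := by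
  set S := {i ∈ range m | ∑ j ∈ range i, w j ≤ c}
  have hS : S.Nonempty := ⟨0, by simp [S, hm, hc]⟩
  obtain ⟨him, hi⟩ := mem_filter.mp (S.max'_mem hS)
  set i := S.max' hS
  refine ⟨i, mem_range.mp him, hi, ?_⟩
  rcases le_or_gt m (i + 1) with hlast | hnext
  · rw [Ico_eq_empty_of_le hlast, sum_empty]
    exact sub_nonneg.mpr hcL
  · have hexceeds : c < ∑ j ∈ range (i + 1), w j := by
      by_contra! h
      have : i + 1 ≤ i := S.le_max' _ (mem_filter.mpr ⟨mem_range.mpr hnext, h⟩)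
      omega
    rw [← sum_range_add_sum_Ico w hnext.le, add_sub_right_comm]
    exact le_add_of_nonneg_left (sub_nonneg.mpr hexceeds.le)

/-- A path of total weight `L` splits into a prefix of weight `≤ L/2`, a single edge, and a
suffix of weight `≤ L/2`. The path `v_0, …, v_m` is represented by its edge weights
`w j = w(v_j, v_{j+1})` for `j < m`. -/
theorem stmt_3 (m : ℕ) (hm : 1 ≤ m) (w : ℕ → ℝ) (hw : ∀ j, 0 ≤ w j)
    (L : ℝ) (hL : L = ∑ j ∈ Finset.range m, w j) :
    ∃ i < m, (∑ j ∈ Finset.range i, w j) ≤ L / 2 ∧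
      (∑ j ∈ Finset.Ico (i + 1) m, w j) ≤ L / 2 := by
  have hL0 : 0 ≤ L := hL ▸ sum_nonneg fun j _ => hw j
  obtain ⟨i, him, hprefix, hsuffix⟩ :=
    exists_sum_range_le_and_sum_Ico_le w hm (c := L / 2) (by linarith) (by linarith)
  exact ⟨i, him, hprefix, by linarith⟩
end

section
/- Let π = (v_0, ..., v_m) be a path in a weighted graph with nonnegative edge weights and total weight L, and let 0 < δ ≤ 1. Then the vertices of π can be partitioned into at most ⌈1/δ⌉ consecutive subpaths, each of total weight at most δ·L, such that consecutive subpaths are joined by a single edge of π. -/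
/-!
Cut greedily: the first segment runs from `v_i` to the last vertex `v_j` at which its weight is
still at most `c = δ L`, so that the segment together with the connecting edge `(v_j, v_{j+1})`
weighs more than `c`. If the remaining weight was at most `n c`, the rest therefore weighs less
than `(n - 1) c`, and induction on `n` gives at most `n` segments; the whole path weighs
`L ≤ ⌈1/δ⌉ δ L`.
-/

open Finset

/-- The path is given by its edge weights `w j = w(v_j, v_{j+1})`; the `t`-th of the `s` segments
of `v_i, …, v_m` is `v_{a t}, …, v_{b t}`, whose edges are indexed by `Ico (a t) (b t)`. -/
structure IsSubpathPartition (w : ℕ → ℝ) (c : ℝ) (i m s : ℕ) (a b : ℕ → ℕ) : Prop where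
  first : a 0 = i
  last : b (s - 1) = m
  le : ∀ t < s, a t ≤ b t
  succ : ∀ t, t + 1 < s → a (t + 1) = b t + 1
  weight_le : ∀ t < s, ∑ j ∈ Ico (a t) (b t), w j ≤ c

namespace IsSubpathPartition

variable {w : ℕ → ℝ} {c : ℝ} {i m : ℕ}

theorem single (him : i ≤ m) (hc : ∑ j ∈ Ico i m, w j ≤ c) :
    IsSubpathPartition w c i m 1 (fun _ => i) (fun _ => m) where
  first := rfl
  last := rfl
  le _ _ := him
  succ _ ht := by omega
  weight_le _ _ := hc

theorem cons {j s : ℕ} {a b : ℕ → ℕ} (hs : 1 ≤ s) (hij : i ≤ j) (hc : ∑ k ∈ Ico i j, w k ≤ c)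
    (h : IsSubpathPartition w c (j + 1) m s a b) :
    IsSubpathPartition w c i m (s + 1) (fun | 0 => i | t + 1 => a t)
      (fun | 0 => j | t + 1 => b t) where
  first := rfl
  last := by
    obtain ⟨s, rfl⟩ : ∃ s', s = s' + 1 := ⟨s - 1, by omega⟩
    exact h.last
  le
    | 0, _ => hij
    | t + 1, ht => h.le t (by omega)
  succ
    | 0, _ => h.first
    | t + 1, ht => h.succ t (by omega)
  weight_le
    | 0, _ => hc
    | t + 1, ht => h.weight_le t (by omega)

end IsSubpathPartition

theorem exists_greedy_cut {w : ℕ → ℝ} {c : ℝ} {i m : ℕ} (hc : 0 ≤ c)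
    (hcm : c < ∑ k ∈ Ico i m, w k) :
    ∃ j, i ≤ j ∧ j < m ∧ ∑ k ∈ Ico i j, w k ≤ c ∧ c < ∑ k ∈ Ico i (j + 1), w k := by
  classical
  have him : i < m := by
    by_contra! h
    rw [Ico_eq_empty_of_le h, sum_empty] at hcm
    linarith
  have hex : ∃ j, c < ∑ k ∈ Ico i (j + 1), w k := ⟨m - 1, by rwa [Nat.sub_add_cancel (by omega)]⟩
  set j := Nat.find hex
  have hij : i ≤ j := by
    by_contra! h
    have := Nat.find_spec hex
    rw [Ico_eq_empty_of_le (by omega), sum_empty] at this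
    linarith
  refine ⟨j, hij, ?_, ?_, Nat.find_spec hex⟩
  · have := Nat.find_min' hex (m := m - 1) (by rwa [Nat.sub_add_cancel (by omega)])
    omega
  · rcases Nat.eq_zero_or_pos j with hj | hj
    · rw [hj, Ico_eq_empty_of_le (Nat.zero_le i), sum_empty]
      exact hc
    · have := Nat.find_min hex (m := j - 1) (by omega)
      rwa [not_lt, Nat.sub_add_cancel hj] at this

theorem exists_isSubpathPartition_of_sum_le {w : ℕ → ℝ} {c : ℝ} (hc : 0 ≤ c) {n i m : ℕ}
    (hn : 1 ≤ n) (him : i ≤ m) (hsum : ∑ k ∈ Ico i m, w k ≤ n * c) :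
    ∃ s a b, 1 ≤ s ∧ s ≤ n ∧ IsSubpathPartition w c i m s a b := by
  induction n generalizing i with
  | zero => omega
  | succ n ih =>
    by_cases hone : ∑ k ∈ Ico i m, w k ≤ c
    · exact ⟨1, _, _, le_rfl, by omega, .single him hone⟩
    obtain ⟨j, hij, hjm, hfirst, hcut⟩ := exists_greedy_cut hc (not_le.mp hone)
    push_cast at hsum
    have hn : 1 ≤ n := Nat.one_le_iff_ne_zero.mpr <| by
      rintro rfl
      exact hone (by simpa using hsum)
    have hrest : ∑ k ∈ Ico (j + 1) m, w k ≤ n * c := by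
      have := sum_Ico_consecutive w (by omega : i ≤ j + 1) (by omega : j + 1 ≤ m)
      linarith
    obtain ⟨s, a, b, hs, hsn, hpart⟩ := ih hn (by omega) hrest
    exact ⟨s + 1, _, _, by omega, by omega, hpart.cons hs hij hfirst⟩

theorem stmt_4_general (m : ℕ) (w : ℕ → ℝ) (hw : ∀ j, 0 ≤ w j) (δ L : ℝ)
    (hδ0 : 0 < δ) (hL : L = ∑ j ∈ Finset.range m, w j) :
    ∃ (s : ℕ) (a b : ℕ → ℕ), 1 ≤ s ∧ s ≤ ⌈1 / δ⌉₊ ∧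
      a 0 = 0 ∧ b (s - 1) = m ∧
      (∀ t < s, a t ≤ b t) ∧
      (∀ t, t + 1 < s → a (t + 1) = b t + 1) ∧
      (∀ t < s, (∑ j ∈ Finset.Ico (a t) (b t), w j) ≤ δ * L) := by
  have hL0 : 0 ≤ L := hL ▸ sum_nonneg fun j _ => hw j
  have hceil : 1 ≤ ⌈1 / δ⌉₊ := Nat.ceil_pos.mpr (by positivity)
  have hsum : ∑ k ∈ Ico 0 m, w k ≤ ⌈1 / δ⌉₊ * (δ * L) := by
    have : 1 ≤ (⌈1 / δ⌉₊ : ℝ) * δ := (div_le_iff₀ hδ0).mp (Nat.le_ceil _)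
    rw [← range_eq_Ico, ← hL]
    nlinarith
  obtain ⟨s, a, b, hs, hsn, h⟩ := exists_isSubpathPartition_of_sum_le
    (mul_nonneg hδ0.le hL0) hceil (Nat.zero_le m) hsum
  exact ⟨s, a, b, hs, hsn, h.first, h.last, h.le, h.succ, h.weight_le⟩

/-- A path of total weight `L` can be partitioned into at most `⌈1/δ⌉` consecutive subpaths,
each of weight at most `δ·L`, with consecutive subpaths joined by a single edge of the path.
The path `v_0, …, v_m` is represented by its edge weights `w j = w(v_j, v_{j+1})`; the
`t`-th segment consists of vertices `a t, …, b t`, whose edges are indexed by `Ico (a t) (b t)`. -/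
theorem stmt_4 (m : ℕ) (w : ℕ → ℝ) (hw : ∀ j, 0 ≤ w j) (δ L : ℝ)
    (hδ0 : 0 < δ) (hδ1 : δ ≤ 1) (hL : L = ∑ j ∈ Finset.range m, w j) :
    ∃ (s : ℕ) (a b : ℕ → ℕ), 1 ≤ s ∧ s ≤ ⌈1 / δ⌉₊ ∧
      a 0 = 0 ∧ b (s - 1) = m ∧
      (∀ t < s, a t ≤ b t) ∧
      (∀ t, t + 1 < s → a (t + 1) = b t + 1) ∧
      (∀ t < s, (∑ j ∈ Finset.Ico (a t) (b t), w j) ≤ δ * L) :=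
  stmt_4_general m w hw δ L hδ0 hL
end
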